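/- arXiv:2601.21118 — 4 statements merged into one kernel-verified Lean document; each statement's English description precedes it below -/
import Mathlib

section
/- For a linear order L, the ordered group V_L := ⊕_{l∈L} ℚ (with the ordering determined by the sign of the coordinate at the maximum of the support) has Archimedean rank order-isomorphic to L; that is, the map sending l to the Archimedean class of the basis vector e_l is an order isomorphism from L onto the linearly ordered set of Archimedean equivalence classes of nonzero elements of V_L. -/
/-!
The Archimedean class of a nonzero `f ∈ V_L` is governed by the top index `l` of its support:
positivity is read off the coefficient at the top index, so `N • e_l < e_m` for all `N` exactly
when `l < m`, and if `c > 0` is the top coefficient of `|f|`, then `e_l < N • |f|` and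
`|f| < N • e_l` as soon as `N > max c c⁻¹`.
-/

/-- `f > 0` in `V_L = ⊕_{l∈L} ℚ` iff the value of `f` at the maximum of its
support is positive. -/
def VLPos {L : Type*} [LinearOrder L] (f : L →₀ ℚ) : Prop :=
  ∃ l : L, 0 < f l ∧ ∀ m : L, l < m → f m = 0

/-- `f < g` in `V_L`. -/
def VLLt {L : Type*} [LinearOrder L] (f g : L →₀ ℚ) : Prop :=
  VLPos (g - f)

open Classical in
/-- The absolute value in `V_L`. -/
noncomputable def VLAbs {L : Type*} [LinearOrder L] (f : L →₀ ℚ) : L →₀ ℚ :=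
  if VLPos f then f else -f

/-- Archimedean equivalence in `V_L`. -/
def VLSim {L : Type*} [LinearOrder L] (f g : L →₀ ℚ) : Prop :=
  ∃ N : ℕ, 0 < N ∧ VLLt (VLAbs g) (N • VLAbs f) ∧ VLLt (VLAbs f) (N • VLAbs g)

/-- The class of `f` is strictly below the class of `g`. -/
def VLLL {L : Type*} [LinearOrder L] (f g : L →₀ ℚ) : Prop :=
  ∀ N : ℕ, 0 < N → VLLt (N • VLAbs f) (VLAbs g)

namespace VL

variable {L : Type*} [LinearOrder L]

open Finsupp

lemma exists_top_of_ne_zero {f : L →₀ ℚ} (hf : f ≠ 0) :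
    ∃ l, f l ≠ 0 ∧ ∀ m, l < m → f m = 0 := by
  have hs : f.support.Nonempty := support_nonempty_iff.mpr hf
  refine ⟨f.support.max' hs, mem_support_iff.mp (f.support.max'_mem hs), fun m hm => ?_⟩
  by_contra h
  exact (f.support.le_max' m (mem_support_iff.mpr h)).not_gt hm

lemma vlPos_iff_of_top {g : L →₀ ℚ} {l : L} (hl : g l ≠ 0) (htop : ∀ m, l < m → g m = 0) :
    VLPos g ↔ 0 < g l := by
  refine ⟨fun ⟨k, hk, hk_top⟩ => ?_, fun h => ⟨l, h, htop⟩⟩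
  rcases lt_trichotomy k l with hkl | rfl | hlk
  · exact absurd (hk_top l hkl) hl
  · exact hk
  · exact absurd (htop k hlk) hk.ne'

lemma not_vlPos_zero : ¬ VLPos (0 : L →₀ ℚ) :=
  fun ⟨_, h, _⟩ => h.ne' rfl

lemma vlPos_single {l : L} {c : ℚ} : VLPos (single l c) ↔ 0 < c := by
  rcases eq_or_ne c 0 with rfl | hc
  · simpa using not_vlPos_zero
  · simpa using vlPos_iff_of_top (g := single l c) (by simpa using hc)
      fun m hm => single_eq_of_ne' hm.ne

lemma vlPos_single_sub_single {l m : L} {a b : ℚ} (ha : 0 < a) (hb : 0 < b) :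
    VLPos (single m a - single l b) ↔ l < m ∨ l = m ∧ b < a := by
  rcases lt_trichotomy l m with hlm | rfl | hml
  · rw [vlPos_iff_of_top (l := m)]
    · simp [single_eq_of_ne' hlm.ne, ha, hlm]
    · simp [single_eq_of_ne' hlm.ne, ha.ne']
    · intro k hk
      simp [single_eq_of_ne' hk.ne, single_eq_of_ne' (hlm.trans hk).ne]
  · rw [← single_sub, vlPos_single, sub_pos]
    simp
  · rw [vlPos_iff_of_top (l := l)]
    · simp [hml.not_gt, hml.ne', hb.le]
    · simp [single_eq_of_ne' hml.ne, hb.ne']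
    · intro k hk
      simp [single_eq_of_ne' hk.ne, single_eq_of_ne' (hml.trans hk).ne]

lemma vlAbs_single_one (l : L) : VLAbs (single l (1 : ℚ)) = single l 1 :=
  if_pos (vlPos_single.mpr one_pos)

lemma exists_top_vlAbs {f : L →₀ ℚ} (hf : f ≠ 0) :
    ∃ l, 0 < VLAbs f l ∧ ∀ m, l < m → VLAbs f m = 0 := by
  obtain ⟨l, hl, htop⟩ := exists_top_of_ne_zero hf
  have hpos := vlPos_iff_of_top hl htop
  unfold VLAbs
  split_ifs with hf_pos
  · exact ⟨l, hpos.mp hf_pos, htop⟩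
  · refine ⟨l, ?_, fun m hm => by simp [htop m hm]⟩
    simpa using lt_of_le_of_ne (not_lt.mp (hf_pos ∘ hpos.mpr)) hl

lemma vlLL_single_one_iff {l m : L} :
    VLLL (single l (1 : ℚ)) (single m 1) ↔ l < m := by
  simp only [VLLL, VLLt, vlAbs_single_one, smul_single, nsmul_one]
  refine ⟨fun h => ?_, fun hlm N hN => ?_⟩
  · simpa using (vlPos_single_sub_single one_pos one_pos).mp (by simpa using h 1 one_pos)
  · exact (vlPos_single_sub_single one_pos (by exact_mod_cast hN)).mpr (Or.inl hlm)

lemma eq_of_vlSim_single_one {l m : L} (h : VLSim (single l (1 : ℚ)) (single m 1)) : l = m := by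
  obtain ⟨N, hN, hml, hlm⟩ := h
  simp only [VLLt, vlAbs_single_one, smul_single, nsmul_one] at hml hlm
  have hN' : (0 : ℚ) < N := by exact_mod_cast hN
  rcases (vlPos_single_sub_single hN' one_pos).mp hml with hml | ⟨rfl, -⟩
  · rcases (vlPos_single_sub_single hN' one_pos).mp hlm with hlm | ⟨rfl, -⟩
    · exact absurd (hml.trans hlm) (lt_irrefl m)
    · rfl
  · rfl

lemma vlSim_single_one_of_top {f : L →₀ ℚ} {l : L} (hl : 0 < VLAbs f l)
    (htop : ∀ m, l < m → VLAbs f m = 0) : VLSim f (single l 1) := by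
  set c := VLAbs f l
  obtain ⟨N, hN⟩ := exists_nat_gt (max c c⁻¹)
  have hc_lt : c < N := (le_max_left _ _).trans_lt hN
  have hone_lt : 1 < N * c := by
    have := (le_max_right _ _).trans_lt hN
    rwa [inv_lt_iff_one_lt_mul₀ hl] at this
  refine ⟨N, by exact_mod_cast hl.trans hc_lt, ?_, ?_⟩ <;>
    simp only [VLLt, vlAbs_single_one] <;>
    refine ⟨l, ?_, fun m hm => by simp [htop m hm, single_eq_of_ne' hm.ne]⟩
  · simpa [c] using hone_lt
  · simpa [c] using hc_lt

lemma exists_vlSim_single_one {f : L →₀ ℚ} (hf : f ≠ 0) : ∃ l, VLSim f (single l (1 : ℚ)) :=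
  let ⟨l, hl, htop⟩ := exists_top_vlAbs hf
  ⟨l, vlSim_single_one_of_top hl htop⟩

end VL

/-- For a linear order `L`, the ordered group `V_L := ⊕_{l∈L} ℚ` has
Archimedean rank order-isomorphic to `L`: the map sending `l` to the
Archimedean class of the basis vector `e_l = single l 1` is injective,
order-preserving, and every nonzero element of `V_L` is Archimedean
equivalent to some `e_l`. -/
theorem VL_archimedean_rank_orderIso {L : Type*} [LinearOrder L] :
    (∀ l : L, (Finsupp.single l (1 : ℚ)) ≠ 0) ∧
    (∀ l m : L, l < m ↔ VLLL (Finsupp.single l (1 : ℚ)) (Finsupp.single m (1 : ℚ))) ∧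
    (∀ l m : L, VLSim (Finsupp.single l (1 : ℚ)) (Finsupp.single m (1 : ℚ)) → l = m) ∧
    (∀ f : L →₀ ℚ, f ≠ 0 → ∃ l : L, VLSim f (Finsupp.single l (1 : ℚ))) :=
  ⟨fun _ => Finsupp.single_ne_zero.mpr one_ne_zero, fun _ _ => VL.vlLL_single_one_iff.symm,
    fun _ _ => VL.eq_of_vlSim_single_one, fun _ => VL.exists_vlSim_single_one⟩
end

section
/- If V is a divisible linearly ordered abelian group and P is a model of Presburger arithmetic, then V × P with coordinatewise addition, lexicographic order, 0 = (0,0) and 1 = (0,1), is again a model of Presburger arithmetic. In particular, it is a discretely ordered abelian group satisfying, for each n ≥ 2, that every element is within distance n-1 above a multiple of n. -/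
/-!
`LexLt` is the strict order of the lexicographic product `V ×ₗ P`, which is a linearly ordered
abelian group, so the order axioms come for free. Anything strictly between `(0, 0)` and
`(0, one)` has first coordinate `0`, so discreteness is inherited from `P`. Division with
remainder is done coordinatewise: divide exactly in `V`, with remainder in `P`.
-/

def LexLt {V P : Type*} [LT V] [LT P] (a b : V × P) : Prop :=
  a.1 < b.1 ∨ (a.1 = b.1 ∧ a.2 < b.2)

section LexLt

variable {V P : Type*}

theorem lexLt_iff_toLex_lt [LT V] [LT P] {a b : V × P} : LexLt a b ↔ toLex a < toLex b :=
  Prod.Lex.toLex_lt_toLex.symm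

theorem lexLt_irrefl [Preorder V] [Preorder P] (a : V × P) : ¬ LexLt a a := by
  rw [lexLt_iff_toLex_lt]
  exact lt_irrefl _

theorem lexLt_trans [Preorder V] [Preorder P] {a b c : V × P} (hab : LexLt a b)
    (hbc : LexLt b c) : LexLt a c := by
  rw [lexLt_iff_toLex_lt] at *
  exact hab.trans hbc

theorem lexLt_trichotomy [LinearOrder V] [LinearOrder P] (a b : V × P) :
    LexLt a b ∨ a = b ∨ LexLt b a := by
  simp only [lexLt_iff_toLex_lt, ← toLex_inj (a := a)]
  exact lt_trichotomy _ _

theorem lexLt_add_left [AddCommMonoid V] [PartialOrder V] [IsOrderedCancelAddMonoid V]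
    [AddCommMonoid P] [PartialOrder P] [IsOrderedCancelAddMonoid P] {a b : V × P}
    (h : LexLt a b) (c : V × P) : LexLt (c + a) (c + b) := by
  rw [lexLt_iff_toLex_lt] at *
  simpa only [toLex_add] using add_lt_add_right h (toLex c)

theorem not_lexLt_mk_and_lexLt_mk [Preorder V] [LT P] {v : V} {p q : P}
    (h : ∀ x : P, ¬ (p < x ∧ x < q)) (z : V × P) : ¬ (LexLt (v, p) z ∧ LexLt z (v, q)) := by
  rintro ⟨hl | ⟨e₁, hl⟩, hr | ⟨e₂, hr⟩⟩
  · exact lt_asymm hl hr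
  · exact lt_irrefl v (hl.trans_eq e₂)
  · exact lt_irrefl v (e₁.trans_lt hr)
  · exact h z.2 ⟨hl, hr⟩

end LexLt

theorem Prod.exists_eq_nsmul_add_nsmul_mk_zero {V P : Type*} [AddCommMonoid V] [AddCommMonoid P]
    {n : ℕ} {one : P} (hV : ∀ v : V, ∃ w, n • w = v)
    (hP : ∀ x : P, ∃ y : P, ∃ r : ℕ, r < n ∧ x = n • y + r • one) (x : V × P) :
    ∃ y : V × P, ∃ r : ℕ, r < n ∧ x = n • y + r • ((0 : V), one) := by
  obtain ⟨w, hw⟩ := hV x.1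
  obtain ⟨y, r, hr, hy⟩ := hP x.2
  exact ⟨(w, y), r, hr, Prod.ext (by simp [hw]) (by simpa using hy)⟩

/-- If `V` is a divisible linearly ordered abelian group and `P` is a model of
Presburger arithmetic (a discretely ordered abelian group with `one` the
successor of `0`, satisfying the division-with-remainder axioms), then `V × P`
with coordinatewise addition, lexicographic order, `0 = (0,0)`, `1 = (0, one)`
is again a model of Presburger arithmetic: the lexicographic order is a
translation-invariant strict linear order, it is discrete (nothing strictly
between `0` and `1`), `1 > 0`, and the division axioms hold. -/
theorem prod_divisible_presburger_is_presburger
    {V P : Type*} [AddCommGroup V] [LinearOrder V] [IsOrderedAddMonoid V]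
    [AddCommGroup P] [LinearOrder P] [IsOrderedAddMonoid P]
    (one : P) (hpos : 0 < one)
    (hdisc : ∀ x : P, ¬ (0 < x ∧ x < one))
    (hdivrem : ∀ n : ℕ, 2 ≤ n → ∀ x : P, ∃ y : P, ∃ r : ℕ, r < n ∧ x = n • y + r • one)
    (hVdiv : ∀ (v : V) (n : ℕ), 0 < n → ∃ w : V, n • w = v) :
    (∀ a : V × P, ¬ LexLt a a) ∧
    (∀ a b c : V × P, LexLt a b → LexLt b c → LexLt a c) ∧
    (∀ a b : V × P, LexLt a b ∨ a = b ∨ LexLt b a) ∧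
    (∀ a b c : V × P, LexLt a b → LexLt (c + a) (c + b)) ∧
    LexLt (0 : V × P) ((0 : V), one) ∧
    (∀ x : V × P, ¬ (LexLt 0 x ∧ LexLt x ((0 : V), one))) ∧
    (∀ n : ℕ, 2 ≤ n → ∀ x : V × P, ∃ y : V × P, ∃ r : ℕ,
      r < n ∧ x = n • y + r • (((0 : V), one) : V × P)) :=
  ⟨lexLt_irrefl, fun _ _ _ => lexLt_trans, lexLt_trichotomy,
    fun _ _ c h => lexLt_add_left h c, Or.inr ⟨rfl, hpos⟩, not_lexLt_mk_and_lexLt_mk hdisc,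
    fun n hn => Prod.exists_eq_nsmul_add_nsmul_mk_zero
      (fun v => hVdiv v n (by omega)) (hdivrem n hn)⟩
end

section
/- Let P and Q be torsion-free abelian groups, let b₁,...,b_n ∈ P be a basis (maximal ℤ-linearly independent set) together with further data, and let a₁,...,a_n ∈ Q be such that: (i) {a₁,...,a_n} is linearly independent, and (ii) for each i and each positive integer m and integers k's, divisibility facts transfer (a_i has the same residue data as b_i). Then the map sending each b_i to a_i extends uniquely to a group embedding f : P → Q determined by: if m·p = k₁b₁+...+k_nb_n then f(p) is the unique q ∈ Q with m·q = k₁a₁+...+k_na_n. Uniqueness of q follows from torsion-freeness. -/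
/-!
Every `p : P` has a positive multiple `m • p = ∑ kᵢ • bᵢ` in the span of the basis. Transfer gives
some `q` with `m • q = ∑ kᵢ • aᵢ`, unique because `Q` is torsion-free; independence of the `bᵢ`
makes it independent of the chosen relation, so it defines `f p`. Cancelling a common multiple in
`Q` again shows that `f` is additive, and independence of the `aᵢ` together with torsion-freeness of
`P` makes `f` injective.
-/

open Function

theorem IsAddTorsionFree.of_nsmul_eq_zero {G : Type*} [AddCommGroup G]
    (h : ∀ (m : ℕ) (x : G), 0 < m → m • x = 0 → x = 0) : IsAddTorsionFree G :=
  ⟨fun _ hm _ _ hxy => sub_eq_zero.1 <| h _ _ (Nat.pos_of_ne_zero hm) <| by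
    simpa [smul_sub, sub_eq_zero] using hxy⟩

namespace AddMonoidHom

variable {V P Q : Type*} [AddCommGroup V] [AddCommGroup P] [AddCommGroup Q] {B : V →+ P}
  {A : V →+ Q}

theorem mul_nsmul_add_eq_map {C : V →+ P} {x₁ x₂ : P} {m₁ m₂ : ℕ} {v₁ v₂ : V}
    (h₁ : m₁ • x₁ = C v₁) (h₂ : m₂ • x₂ = C v₂) :
    (m₁ * m₂) • (x₁ + x₂) = C (m₂ • v₁ + m₁ • v₂) := by
  rw [map_add, map_nsmul, map_nsmul, ← h₁, ← h₂, smul_add, mul_smul, mul_smul, smul_comm m₁ m₂ x₁]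

theorem nsmul_map_eq_nsmul_map_of_injective (hB : Injective B) {p : P} {m₁ m₂ : ℕ}
    {v₁ v₂ : V} (h₁ : m₁ • p = B v₁) (h₂ : m₂ • p = B v₂) : m₂ • A v₁ = m₁ • A v₂ := by
  have : m₂ • v₁ = m₁ • v₂ := hB <| by rw [map_nsmul, map_nsmul, ← h₁, ← h₂, smul_comm]
  rw [← map_nsmul, ← map_nsmul, this]

theorem ext_of_comp_eq [IsAddTorsionFree Q] (hP : ∀ p, ∃ m : ℕ, ∃ v, 0 < m ∧ m • p = B v)
    {f g : P →+ Q} (h : f.comp B = g.comp B) : f = g := by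
  ext p
  obtain ⟨m, v, hm, hp⟩ := hP p
  refine nsmul_right_injective hm.ne' ?_
  simp only [← map_nsmul, hp]
  exact DFunLike.congr_fun h v

theorem injective_of_nsmul_map_eq [IsAddTorsionFree P] (hA : Injective A)
    (hP : ∀ p, ∃ m : ℕ, ∃ v, 0 < m ∧ m • p = B v) {f : P →+ Q}
    (hf : ∀ p (m : ℕ) v, m • p = B v → m • f p = A v) : Injective f := by
  refine (injective_iff_map_eq_zero f).2 fun p hp => ?_
  obtain ⟨m, v, hm, hmp⟩ := hP p
  have hv : v = 0 := hA <| by rw [← hf p m v hmp, hp, smul_zero, map_zero]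
  rwa [hv, map_zero, nsmul_eq_zero_iff_right hm.ne'] at hmp

variable [IsAddTorsionFree Q]

theorem nsmul_eq_map_of_nsmul_eq_map (hB : Injective B) {p : P} {m₀ : ℕ} {v₀ : V}
    (hm₀ : 0 < m₀) (h₀ : m₀ • p = B v₀) {q : Q} (hq : m₀ • q = A v₀) {m : ℕ} {v : V}
    (h : m • p = B v) : m • q = A v :=
  nsmul_right_injective hm₀.ne' <| by
    dsimp only
    rw [smul_comm, hq, nsmul_map_eq_nsmul_map_of_injective hB h₀ h]

theorem exists_extension (hB : Injective B) (hP : ∀ p, ∃ m : ℕ, ∃ v, 0 < m ∧ m • p = B v)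
    (htransfer : ∀ (m : ℕ) v, 0 < m → (∃ p, m • p = B v) → ∃ q : Q, m • q = A v) :
    ∃ f : P →+ Q, ∀ p (m : ℕ) v, m • p = B v → m • f p = A v := by
  have hF : ∀ p, ∃ q, ∀ (m : ℕ) v, m • p = B v → m • q = A v := fun p => by
    obtain ⟨m₀, v₀, hm₀, h₀⟩ := hP p
    obtain ⟨q, hq⟩ := htransfer m₀ v₀ hm₀ ⟨p, h₀⟩
    exact ⟨q, fun m v => nsmul_eq_map_of_nsmul_eq_map hB hm₀ h₀ hq⟩
  choose F hF using hF
  refine ⟨AddMonoidHom.mk' F fun p₁ p₂ => ?_, hF⟩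
  obtain ⟨m₁, v₁, hm₁, h₁⟩ := hP p₁
  obtain ⟨m₂, v₂, hm₂, h₂⟩ := hP p₂
  refine nsmul_right_injective (Nat.mul_pos hm₁ hm₂).ne' ?_
  dsimp only
  rw [hF _ _ _ (mul_nsmul_add_eq_map h₁ h₂),
    mul_nsmul_add_eq_map (hF p₁ m₁ v₁ h₁) (hF p₂ m₂ v₂ h₂)]

end AddMonoidHom

/-- Let `P` and `Q` be torsion-free abelian groups, `b₁, …, b_n ∈ P` a basis
(a maximal ℤ-linearly independent set, so every element satisfies a dependence
equation over it) and `a₁, …, a_n ∈ Q` a linearly independent family such that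
all divisibility facts transfer from the `b`'s to the `a`'s.  Then `b_i ↦ a_i`
extends to a group embedding `f : P → Q`, uniquely determined by
`m • p = ∑ k_i • b_i → m • f p = ∑ k_i • a_i`, and such an extension is the
unique homomorphism sending each `b_i` to `a_i`. -/
theorem basis_to_independent_extends_to_embedding
    {P Q : Type*} [AddCommGroup P] [AddCommGroup Q]
    (htfP : ∀ (m : ℕ) (x : P), 0 < m → m • x = 0 → x = 0)
    (htfQ : ∀ (m : ℕ) (x : Q), 0 < m → m • x = 0 → x = 0)
    {n : ℕ} (b : Fin n → P) (a : Fin n → Q)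
    (hbindep : ∀ k : Fin n → ℤ, ∑ i, k i • b i = 0 → ∀ i, k i = 0)
    (hbbasis : ∀ p : P, ∃ (m : ℕ) (k : Fin n → ℤ), 0 < m ∧ m • p = ∑ i, k i • b i)
    (haindep : ∀ k : Fin n → ℤ, ∑ i, k i • a i = 0 → ∀ i, k i = 0)
    (htransfer : ∀ (m : ℕ) (k : Fin n → ℤ), 0 < m →
      (∃ p : P, m • p = ∑ i, k i • b i) → ∃ q : Q, m • q = ∑ i, k i • a i) :
    (∃ f : P →+ Q, Function.Injective f ∧ (∀ i, f (b i) = a i) ∧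
      ∀ (p : P) (m : ℕ) (k : Fin n → ℤ), 0 < m → m • p = ∑ i, k i • b i →
        m • f p = ∑ i, k i • a i) ∧
    (∀ f g : P →+ Q, (∀ i, f (b i) = a i) → (∀ i, g (b i) = a i) → f = g) := by
  have := IsAddTorsionFree.of_nsmul_eq_zero htfP
  have := IsAddTorsionFree.of_nsmul_eq_zero htfQ
  let B := (Fintype.linearCombination ℤ b).toAddMonoidHom
  let A := (Fintype.linearCombination ℤ a).toAddMonoidHom
  have hB : Injective B :=
    (Fintype.linearIndependent_iff.2 hbindep).fintypeLinearCombination_injective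
  have hA : Injective A :=
    (Fintype.linearIndependent_iff.2 haindep).fintypeLinearCombination_injective
  obtain ⟨f, hf⟩ := AddMonoidHom.exists_extension (A := A) hB hbbasis htransfer
  have hcomp {g : P →+ Q} (hg : ∀ i, g (b i) = a i) : g.comp B = A := by
    ext k
    simp [B, A, Fintype.linearCombination_apply, hg]
  refine ⟨⟨f, AddMonoidHom.injective_of_nsmul_map_eq hA hbbasis hf,
    fun i => ?_, fun p m k _ => hf p m k⟩, fun g g' hg hg' =>
    AddMonoidHom.ext_of_comp_eq hbbasis ((hcomp hg).trans (hcomp hg').symm)⟩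
  simpa [A] using hf (b i) 1 (Pi.single i 1) (by simp [B])
end

section
/- If a structure A is a model of the theory of (ℤ,+,<,0,1) and a ∈ A has the residue sequence of 0 (i.e., for every n ≥ 1 there is b with n·b = a), then for every rational q = k/m (m > 0) there is a unique element qa ∈ A with m·(qa) = k·a; moreover the map q ↦ qa is an injective order-preserving group homomorphism from ℚ into A when a > 0. -/
/-!
A linearly ordered abelian group is torsion-free, so `m • x = k • a` has at most one solution,
and `k • b` is one as soon as `m • b = a`. Choosing the solution `f q` for `q = q.num / q.den`,
any equation `q * m = k` with `k` an integer transfers to `m • f q = k • a` after multiplying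
through by `q.den`; taking for `m` a common denominator reduces additivity of `f` to integer
arithmetic, and positivity of `f` on positive rationals (hence strict monotonicity) to
`0 < q.num • a`.
-/

section TorsionFree

variable {A : Type*} [AddCommGroup A] [IsAddTorsionFree A]

theorem existsUnique_nsmul_eq_zsmul_of_nsmul_eq {a b : A} {m : ℕ} (hm : m ≠ 0)
    (hb : m • b = a) (k : ℤ) : ∃! x : A, m • x = k • a :=
  ⟨k • b, show m • (k • b) = k • a by rw [smul_comm, hb], fun y hy =>
    nsmul_right_injective hm (show m • y = m • (k • b) by rw [hy, smul_comm, hb])⟩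

variable {a : A} {f : ℚ → A}

theorem nsmul_eq_zsmul_of_mul_eq_intCast (hf : ∀ q : ℚ, q.den • f q = q.num • a) {q : ℚ}
    {m : ℕ} {k : ℤ} (h : q * m = k) : m • f q = k • a := by
  have hnum : q.num * m = k * q.den := by
    exact_mod_cast (show (q.num : ℚ) * m = k * q.den by rw [← Rat.mul_den_eq_num, ← h]; ring)
  apply nsmul_right_injective q.den_nz
  calc q.den • m • f q = (m : ℤ) • q.num • a := by rw [smul_comm, hf, natCast_zsmul]
    _ = (k * q.den) • a := by rw [smul_smul, mul_comm, hnum]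
    _ = q.den • k • a := by rw [mul_comm, ← smul_smul, natCast_zsmul]

theorem map_add_of_forall_den_nsmul_eq (hf : ∀ q : ℚ, q.den • f q = q.num • a) (q q' : ℚ) :
    f (q + q') = f q + f q' := by
  have hq := Rat.mul_den_eq_num q
  have hq' := Rat.mul_den_eq_num q'
  apply nsmul_right_injective (Nat.mul_ne_zero q.den_nz q'.den_nz)
  change (q.den * q'.den) • f (q + q') = (q.den * q'.den) • (f q + f q')
  rw [smul_add, nsmul_eq_zsmul_of_mul_eq_intCast hf (k := q.num * q'.den + q'.num * q.den),
    nsmul_eq_zsmul_of_mul_eq_intCast hf (k := q.num * q'.den),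
    nsmul_eq_zsmul_of_mul_eq_intCast hf (k := q'.num * q.den), add_zsmul]
  · push_cast; linear_combination (q.den : ℚ) * hq'
  · push_cast; linear_combination (q'.den : ℚ) * hq
  · push_cast; linear_combination (q'.den : ℚ) * hq + (q.den : ℚ) * hq'

end TorsionFree

section LinearOrder

variable {A : Type*} [AddCommGroup A] [LinearOrder A] [IsOrderedAddMonoid A] {a : A}
  {f : ℚ → A}

theorem pos_of_forall_den_nsmul_eq (ha : 0 < a) (hf : ∀ q : ℚ, q.den • f q = q.num • a)
    {q : ℚ} (hq : 0 < q) : 0 < f q := by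
  rw [← nsmul_pos_iff q.den_nz, hf]
  exact zsmul_pos ha (Rat.num_pos.mpr hq)

theorem strictMono_of_forall_den_nsmul_eq (ha : 0 < a)
    (hf : ∀ q : ℚ, q.den • f q = q.num • a) : StrictMono f := by
  intro q q' hlt
  calc f q < f q + f (q' - q) :=
        lt_add_of_pos_right _ (pos_of_forall_den_nsmul_eq ha hf (sub_pos.mpr hlt))
    _ = f q' := by rw [← map_add_of_forall_den_nsmul_eq hf, add_sub_cancel]

end LinearOrder

theorem rationals_embed_along_divisible_element_general
    {A : Type*} [AddCommGroup A] [LinearOrder A] [IsOrderedAddMonoid A]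
    (a : A) (ha : ∀ n : ℕ, 0 < n → ∃ b : A, n • b = a) :
    (∀ (k : ℤ) (m : ℕ), 0 < m → ∃! x : A, m • x = k • a) ∧
    (0 < a → ∃ f : ℚ → A,
      (∀ q q' : ℚ, f (q + q') = f q + f q') ∧
      StrictMono f ∧ Function.Injective f ∧
      ∀ q : ℚ, q.den • f q = q.num • a) := by
  have hunique : ∀ (k : ℤ) (m : ℕ), 0 < m → ∃! x : A, m • x = k • a := fun k m hm =>
    let ⟨_, hb⟩ := ha m hm
    existsUnique_nsmul_eq_zsmul_of_nsmul_eq hm.ne' hb k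
  refine ⟨hunique, fun hapos => ?_⟩
  choose f hf using fun q : ℚ => (hunique q.num q.den q.pos).exists
  have hmono := strictMono_of_forall_den_nsmul_eq hapos hf
  exact ⟨f, map_add_of_forall_den_nsmul_eq hf, hmono, hmono.injective, hf⟩

/-- Let `A` be a model of the theory of `(ℤ, +, <, 0, 1)` (a discretely
ordered abelian group, with `one` the successor of `0`, satisfying the
Presburger division-with-remainder axioms), and let `a ∈ A` have the residue
sequence of `0`, i.e. `a` is divisible by every positive integer.  Then for
every rational `q = k/m` there is a unique element `q • a` with
`m • (q • a) = k • a`; moreover, when `a > 0`, the map `q ↦ q • a` is an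
injective order-preserving group homomorphism from `ℚ` into `A`. -/
theorem rationals_embed_along_divisible_element
    {A : Type*} [AddCommGroup A] [LinearOrder A] [IsOrderedAddMonoid A] (one : A) (hone : 0 < one)
    (hdisc : ∀ x : A, ¬ (0 < x ∧ x < one))
    (hdivrem : ∀ n : ℕ, 2 ≤ n → ∀ x : A, ∃ y : A, ∃ r : ℕ, r < n ∧ x = n • y + r • one)
    (a : A) (ha : ∀ n : ℕ, 0 < n → ∃ b : A, n • b = a) :
    (∀ (k : ℤ) (m : ℕ), 0 < m → ∃! x : A, m • x = k • a) ∧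
    (0 < a → ∃ f : ℚ → A,
      (∀ q q' : ℚ, f (q + q') = f q + f q') ∧
      StrictMono f ∧ Function.Injective f ∧
      ∀ q : ℚ, q.den • f q = q.num • a) :=
  rationals_embed_along_divisible_element_general a ha
end
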